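/- If f is a weakly holomorphic modular form of weight −k for SL₂(ℤ) (k ≥ 0), then its (k+1)-st derivative f^{(k+1)} is a weakly holomorphic modular form of weight k+2. -/

import Mathlib

/-- The open upper half plane, as a subset of `ℂ`. -/
def UHP : Set ℂ := {z : ℂ | 0 < z.im}

/-- `f` is holomorphic on the upper half plane and transforms with weight `m ∈ ℤ`
under `SL₂(ℤ)`. -/
def IsWeaklyModularOfWeight (m : ℤ) (f : ℂ → ℂ) : Prop :=
  DifferentiableOn ℂ f UHP ∧
    ∀ g : Matrix.SpecialLinearGroup (Fin 2) ℤ, ∀ τ ∈ UHP,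
      f ((((g 0 0 : ℤ) : ℂ) * τ + ((g 0 1 : ℤ) : ℂ)) /
          (((g 1 0 : ℤ) : ℂ) * τ + ((g 1 1 : ℤ) : ℂ))) =
        (((g 1 0 : ℤ) : ℂ) * τ + ((g 1 1 : ℤ) : ℂ)) ^ m * f τ

/-- `f` is meromorphic at the cusp `∞`: it grows at most like `e^{2πN·Im τ}` as
`Im τ → ∞` (finitely many negative Fourier coefficients). -/
def MeromorphicAtCusp (f : ℂ → ℂ) : Prop :=
  ∃ N : ℕ, ∃ C : ℝ, ∀ τ ∈ UHP, 1 ≤ τ.im →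
    ‖f τ‖ ≤ C * Real.exp (2 * Real.pi * N * τ.im)


/-!
The modularity of `f^{(k+1)}` is Bol's identity: for `γ = (a b; c d)` with `ad - bc = 1` and
`J(τ) = cτ + d`, one has `D^{n+1}(J^n · F ∘ γ) = J^{-(n+2)} · F^{(n+1)} ∘ γ`. It follows by
induction on `n` from `J^{n+1} = J · J^n`, the Leibniz rule for the affine factor `J` (whose second
derivative vanishes) and `γ' = J^{-2}`. Weight `-k` means `f = J^k · f ∘ γ` on the upper half
plane, so `n = k` gives `f^{(k+1)} = J^{-(k+2)} · f^{(k+1)} ∘ γ`.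

At the cusp, periodicity and compactness of `[0,1] × [1/2,1]` extend the growth bound on `f` from
`Im τ ≥ 1` to `Im τ ≥ 1/2`, and Cauchy's estimate on discs of radius `1/2` transfers it to every
derivative on `Im τ ≥ 1`.
-/

open Set Real Metric
open scoped MatrixGroups UpperHalfPlane

section Calculus

variable {𝕜 : Type*} [NontriviallyNormedField 𝕜]

lemma hasDerivAt_affine (c d x : 𝕜) : HasDerivAt (fun z => c * z + d) c x := by
  simpa using ((hasDerivAt_id' x).const_mul c).add_const d

lemma iteratedDeriv_succ_affine_mul {c d x : 𝕜} {h : 𝕜 → 𝕜} (n : ℕ)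
    (hh : ContDiffAt 𝕜 (n + 1) h x) :
    iteratedDeriv (n + 1) (fun z => (c * z + d) * h z) x =
      (c * x + d) * iteratedDeriv (n + 1) h x + (n + 1) * c * iteratedDeriv n h x := by
  have hderiv : deriv (fun z => c * z + d) = fun _ => c := funext fun z => (hasDerivAt_affine c d z).deriv
  rw [iteratedDeriv_fun_mul (by fun_prop) (by exact_mod_cast hh), Finset.sum_range_succ',
    Finset.sum_range_succ', Finset.sum_eq_zero]
  · simp [iteratedDeriv_succ', hderiv]
    ring
  · intro i _
    simp [iteratedDeriv_succ', hderiv, iteratedDeriv_const]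

lemma hasDerivAt_moebius {a b c d x : 𝕜} (hdet : a * d - b * c = 1) (hJ : c * x + d ≠ 0) :
    HasDerivAt (fun z => (a * z + b) / (c * z + d)) ((c * x + d) ^ 2)⁻¹ x :=
  ((hasDerivAt_affine a b x).fun_div (hasDerivAt_affine c d x) hJ).congr_deriv <| by
    rw [inv_eq_one_div, ← hdet]; ring

lemma AnalyticOnNhd.iteratedDeriv {E : Type*} [NormedAddCommGroup E] [NormedSpace 𝕜 E]
    [CompleteSpace E] {f : 𝕜 → E} {s : Set 𝕜} (hf : AnalyticOnNhd 𝕜 f s) (n : ℕ) :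
    AnalyticOnNhd 𝕜 (iteratedDeriv n f) s := by
  simpa only [iteratedDeriv_eq_iterate] using hf.iterated_deriv n

end Calculus

section Bol

variable {a b c d : ℂ}

lemma analyticAt_moebius {τ : ℂ} (hJ : c * τ + d ≠ 0) :
    AnalyticAt ℂ (fun τ => (a * τ + b) / (c * τ + d)) τ := by
  fun_prop (disch := exact hJ)

theorem iteratedDeriv_pow_mul_comp_moebius {U V : Set ℂ} (hU : IsOpen U)
    (hdet : a * d - b * c = 1) (hJ : ∀ τ ∈ U, c * τ + d ≠ 0)
    (hUV : MapsTo (fun τ => (a * τ + b) / (c * τ + d)) U V)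
    {F : ℂ → ℂ} (hF : AnalyticOnNhd ℂ F V) (n : ℕ) :
    EqOn (iteratedDeriv (n + 1) fun τ => (c * τ + d) ^ n * F ((a * τ + b) / (c * τ + d)))
      (fun τ => ((c * τ + d) ^ (n + 2))⁻¹ *
        iteratedDeriv (n + 1) F ((a * τ + b) / (c * τ + d))) U := by
  set γ := fun τ => (a * τ + b) / (c * τ + d)
  have hγ {m : ℕ} {τ : ℂ} (hτ : τ ∈ U) : HasDerivAt (fun τ => iteratedDeriv m F (γ τ))
      (iteratedDeriv (m + 1) F (γ τ) * ((c * τ + d) ^ 2)⁻¹) τ := by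
    rw [iteratedDeriv_succ]
    exact ((hF.iteratedDeriv m) _ (hUV hτ)).differentiableAt.hasDerivAt.comp τ
      (hasDerivAt_moebius hdet (hJ τ hτ))
  induction n with
  | zero =>
    intro τ hτ
    simpa [mul_comm] using (hγ (m := 0) hτ).deriv
  | succ n ih =>
    intro τ hτ
    set h := fun τ => (c * τ + d) ^ n * F (γ τ)
    have hJτ := hJ τ hτ
    have hh : AnalyticAt ℂ h τ :=
      (by fun_prop : AnalyticAt ℂ (fun τ => (c * τ + d) ^ n) τ).mul
        ((hF _ (hUV hτ)).comp (analyticAt_moebius hJτ))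
    have hD := ((((hasDerivAt_affine c d τ).fun_pow (n + 2)).fun_inv (pow_ne_zero _ hJτ)).mul
      (hγ hτ)).congr_of_eventuallyEq (Filter.eventuallyEq_of_mem (hU.mem_nhds hτ) ih)
    have hsplit : (fun τ => (c * τ + d) ^ (n + 1) * F (γ τ)) = fun τ => (c * τ + d) * h τ := by
      ext τ; simp only [h]; ring
    rw [hsplit, iteratedDeriv_succ_affine_mul _ hh.contDiffAt,
      iteratedDeriv_succ (f := h) (n := n + 1), hD.deriv, ih hτ]
    dsimp only [γ]
    field_simp
    push_cast
    ring

end Bol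

lemma isOpen_UHP : IsOpen UHP := isOpen_lt continuous_const Complex.continuous_im

lemma moebius_mem_UHP (g : SL(2, ℤ)) {τ : ℂ} (hτ : τ ∈ UHP) :
    (((g 0 0 : ℤ) : ℂ) * τ + ((g 0 1 : ℤ) : ℂ)) / (((g 1 0 : ℤ) : ℂ) * τ + ((g 1 1 : ℤ) : ℂ))
      ∈ UHP := by
  have := (g • (⟨τ, hτ⟩ : ℍ)).im_pos
  rw [UpperHalfPlane.im, UpperHalfPlane.coe_specialLinearGroup_apply] at this
  simpa [UHP] using this

-- If the denominator vanished, the quotient would be the junk value `0 ∉ UHP`.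
lemma moebius_denom_ne_zero (g : SL(2, ℤ)) {τ : ℂ} (hτ : τ ∈ UHP) :
    ((g 1 0 : ℤ) : ℂ) * τ + ((g 1 1 : ℤ) : ℂ) ≠ 0 := by
  intro h
  simpa [h, UHP] using moebius_mem_UHP g hτ

lemma SL2Z_cast_det_eq_one (g : SL(2, ℤ)) :
    ((g 0 0 : ℤ) : ℂ) * ((g 1 1 : ℤ) : ℂ) - ((g 0 1 : ℤ) : ℂ) * ((g 1 0 : ℤ) : ℂ) = 1 := by
  have := g.det_coe
  rw [Matrix.det_fin_two] at this
  exact_mod_cast this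

lemma IsWeaklyModularOfWeight.congr {m : ℤ} {f g : ℂ → ℂ} (hf : IsWeaklyModularOfWeight m f)
    (hfg : EqOn f g UHP) : IsWeaklyModularOfWeight m g := by
  refine ⟨hf.1.congr hfg.symm, fun γ τ hτ => ?_⟩
  rw [← hfg hτ, ← hfg (moebius_mem_UHP γ hτ)]
  exact hf.2 γ τ hτ

lemma MeromorphicAtCusp.congr {f g : ℂ → ℂ} (hf : MeromorphicAtCusp f) (hfg : EqOn f g UHP) :
    MeromorphicAtCusp g := by
  obtain ⟨N, C, hC⟩ := hf
  exact ⟨N, C, fun τ hτ h1 => hfg hτ ▸ hC τ hτ h1⟩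

theorem IsWeaklyModularOfWeight.iteratedDeriv_succ {k : ℕ} {f : ℂ → ℂ}
    (hf : IsWeaklyModularOfWeight (-(k : ℤ)) f) :
    IsWeaklyModularOfWeight ((k : ℤ) + 2) (iteratedDeriv (k + 1) f) := by
  have hfa : AnalyticOnNhd ℂ f UHP := hf.1.analyticOnNhd isOpen_UHP
  refine ⟨(hfa.iteratedDeriv (k + 1)).differentiableOn, fun g τ hτ => ?_⟩
  have hf' : EqOn f (fun τ => (((g 1 0 : ℤ) : ℂ) * τ + ((g 1 1 : ℤ) : ℂ)) ^ k *
      f ((((g 0 0 : ℤ) : ℂ) * τ + ((g 0 1 : ℤ) : ℂ)) /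
        (((g 1 0 : ℤ) : ℂ) * τ + ((g 1 1 : ℤ) : ℂ)))) UHP := by
    intro τ hτ
    dsimp only
    rw [hf.2 g τ hτ, zpow_neg, zpow_natCast, ← mul_assoc,
      mul_inv_cancel₀ (pow_ne_zero _ (moebius_denom_ne_zero g hτ)), one_mul]
  have hbol := iteratedDeriv_pow_mul_comp_moebius isOpen_UHP (SL2Z_cast_det_eq_one g)
    (fun τ hτ => moebius_denom_ne_zero g hτ) (fun τ hτ => moebius_mem_UHP g hτ) hfa k hτ
  rw [hf'.iteratedDeriv_of_isOpen isOpen_UHP (k + 1) hτ, hbol,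
    show ((k : ℤ) + 2) = ((k + 2 : ℕ) : ℤ) by push_cast; ring, zpow_natCast, ← mul_assoc,
    mul_inv_cancel₀ (pow_ne_zero _ (moebius_denom_ne_zero g hτ)), one_mul]

lemma IsWeaklyModularOfWeight.apply_add_intCast {m : ℤ} {f : ℂ → ℂ}
    (hf : IsWeaklyModularOfWeight m f) (n : ℤ) {τ : ℂ} (hτ : τ ∈ UHP) : f (τ + n) = f τ := by
  simpa [ModularGroup.coe_T_zpow] using hf.2 (ModularGroup.T ^ n) τ hτ

lemma MeromorphicAtCusp.exists_bound_of_periodic {f : ℂ → ℂ} (hf : MeromorphicAtCusp f)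
    (hcont : ContinuousOn f UHP) (hper : ∀ n : ℤ, ∀ τ ∈ UHP, f (τ + n) = f τ)
    {y₀ : ℝ} (hy₀ : 0 < y₀) :
    ∃ N : ℕ, ∃ C : ℝ, ∀ τ : ℂ, y₀ ≤ τ.im → ‖f τ‖ ≤ C * exp (2 * π * N * τ.im) := by
  obtain ⟨N, C, hC⟩ := hf
  have hK : Icc 0 1 ×ℂ Icc y₀ 1 ⊆ UHP := fun z hz =>
    hy₀.trans_le (Complex.mem_reProdIm.1 hz).2.1
  obtain ⟨M, hM⟩ := (isCompact_Icc.reProdIm isCompact_Icc).exists_bound_of_continuousOn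
    (hcont.mono hK)
  refine ⟨N, max C M, fun τ hτ => ?_⟩
  have hτU : τ ∈ UHP := hy₀.trans_le hτ
  rcases le_or_gt 1 τ.im with h1 | h1
  · exact (hC τ hτU h1).trans (by gcongr; exact le_max_left C M)
  · set τ' := τ - ⌊τ.re⌋
    have hτ' : τ' ∈ Icc 0 1 ×ℂ Icc y₀ 1 := by
      refine Complex.mem_reProdIm.2 ⟨⟨?_, ?_⟩, ?_, ?_⟩ <;>
        simp [τ', Int.fract_nonneg, (Int.fract_lt_one _).le, hτ, h1.le]
    have hfτ : f τ = f τ' := by simpa [τ'] using hper ⌊τ.re⌋ τ' (hK hτ')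
    have hM0 : 0 ≤ M := (norm_nonneg _).trans (hM τ' hτ')
    calc ‖f τ‖ = ‖f τ'‖ := by rw [hfτ]
      _ ≤ M := hM τ' hτ'
      _ ≤ max C M * 1 := by rw [mul_one]; exact le_max_right C M
      _ ≤ max C M * exp (2 * π * N * τ.im) :=
        mul_le_mul_of_nonneg_left (one_le_exp (mul_nonneg (by positivity) hτU.le))
          (hM0.trans (le_max_right C M))

lemma meromorphicAtCusp_iteratedDeriv_of_bound {f : ℂ → ℂ} (hf : DifferentiableOn ℂ f UHP)
    {N : ℕ} {C : ℝ} (hC : ∀ τ : ℂ, 1 / 2 ≤ τ.im → ‖f τ‖ ≤ C * exp (2 * π * N * τ.im)) (n : ℕ) :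
    MeromorphicAtCusp (iteratedDeriv n f) := by
  refine ⟨N, n.factorial * 2 ^ n * C * exp (π * N), fun τ _ hτ => ?_⟩
  have him {z : ℂ} (hz : z ∈ closedBall τ (1 / 2)) : |z.im - τ.im| ≤ 1 / 2 := by
    rw [← Complex.sub_im]
    exact (Complex.abs_im_le_norm _).trans (mem_closedBall_iff_norm.1 hz)
  have hball : closedBall τ (1 / 2) ⊆ UHP := fun z hz => by
    have := abs_le.1 (him hz); change 0 < z.im; linarith
  have hsphere : ∀ z ∈ sphere τ (1 / 2), ‖f z‖ ≤ C * exp (2 * π * N * (τ.im + 1 / 2)) := by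
    intro z hz
    have hz' := abs_le.1 (him (sphere_subset_closedBall hz))
    have hC0 : 0 ≤ C := nonneg_of_mul_nonneg_left ((norm_nonneg _).trans (hC τ (by linarith)))
      (exp_pos _)
    exact (hC z (by linarith)).trans (by gcongr; linarith)
  calc ‖iteratedDeriv n f τ‖
      ≤ n.factorial * (C * exp (2 * π * N * (τ.im + 1 / 2))) / (1 / 2) ^ n :=
        Complex.norm_iteratedDeriv_le_of_forall_mem_sphere_norm_le n (by norm_num)
          (hf.diffContOnCl_ball hball) hsphere
    _ = n.factorial * 2 ^ n * C * exp (π * N) * exp (2 * π * N * τ.im) := by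
        rw [show 2 * π * N * (τ.im + 1 / 2) = π * N + 2 * π * N * τ.im by ring, exp_add,
          one_div, inv_pow, div_inv_eq_mul]
        ring

theorem IsWeaklyModularOfWeight.meromorphicAtCusp_iteratedDeriv {m : ℤ} {f : ℂ → ℂ}
    (hf : IsWeaklyModularOfWeight m f) (hcusp : MeromorphicAtCusp f) (n : ℕ) :
    MeromorphicAtCusp (iteratedDeriv n f) := by
  obtain ⟨N, C, hC⟩ := hcusp.exists_bound_of_periodic hf.1.continuousOn
    (fun n τ hτ => hf.apply_add_intCast n hτ) (by norm_num : (0 : ℝ) < 1 / 2)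
  exact meromorphicAtCusp_iteratedDeriv_of_bound hf.1 hC n

/-- If `f` is a weakly holomorphic modular form of weight `−k` for `SL₂(ℤ)` (`k ≥ 0`),
then its `(k+1)`-st derivative is a weakly holomorphic modular form of weight `k+2`. -/
theorem iteratedDeriv_of_weakly_modular (k : ℕ) (f : ℂ → ℂ)
    (hmod : IsWeaklyModularOfWeight (-(k : ℤ)) f)
    (hcusp : MeromorphicAtCusp f) :
    IsWeaklyModularOfWeight ((k : ℤ) + 2) (iteratedDerivWithin (k + 1) f UHP) ∧
      MeromorphicAtCusp (iteratedDerivWithin (k + 1) f UHP) := by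
  have hwithin := (iteratedDerivWithin_of_isOpen (n := k + 1) (f := f) isOpen_UHP).symm
  exact ⟨hmod.iteratedDeriv_succ.congr hwithin,
    (hmod.meromorphicAtCusp_iteratedDeriv hcusp (k + 1)).congr hwithin⟩
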